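/- (Proposition 10.) Let (A^F, R^F, A^?, R^?, R^↔, A^C, R^C) be a control AF, let v_CAF = AW_{A^F} ∪ ATT_{R^F} ∪ ATT_{R^C}, let control^CAF = mkTrueSome(AW_{A^C}), and let makeComp^CAF = mkTrueSome(AW_{A^?}); mkTrueSome(ATT_{R^?}); dis(ATT_{R^↔}). Then: (i) if (v_CAF, v) ∈ ‖control^CAF; makeComp^CAF‖ then there is a control configuration CFG ⊆ A^C and a completion (A*, R*) of CAF_CFG such that (A_v, R_v) = (A*, R*); and (ii) for every control configuration CFG ⊆ A^C and every completion (A*, R*) of CAF_CFG there is a valuation v with (v_CAF, v) ∈ ‖control^CAF; makeComp^CAF‖ and (A_v, R_v) = (A*, R*). -/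

import Mathlib

noncomputable section

namespace DLPA

/-- Propositional variables: awareness, acceptance, attack, auxiliary acceptance
copies, plus countably many further auxiliary variables. -/
inductive PVar (U : Type) : Type
  | aw : U → PVar U
  | inn : U → PVar U
  | att : U → U → PVar U
  | inn' : U → PVar U
  | aux : Nat → PVar U

-- DL-PA formulas and programs, by mutual recursion.
mutual
  inductive Form (U : Type) : Type
    | var : PVar U → Form U
    | neg : Form U → Form U
    | conj : Form U → Form U → Form U
    | box : Prog U → Form U → Form U
  inductive Prog (U : Type) : Type
    | add : PVar U → Prog U           -- +p
    | rem : PVar U → Prog U           -- −p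
    | test : Form U → Prog U          -- φ?
    | seq : Prog U → Prog U → Prog U
    | choice : Prog U → Prog U → Prog U
    | conv : Prog U → Prog U
end

variable {U : Type}

/-- A valuation is a set of propositional variables. -/
abbrev Val (U : Type) := Set (PVar U)

-- Satisfaction of formulas and interpretation of programs, by mutual recursion.
mutual
  def Sat : Val U → Form U → Prop
    | v, Form.var p => p ∈ v
    | v, Form.neg φ => ¬ Sat v φ
    | v, Form.conj φ ψ => Sat v φ ∧ Sat v ψ
    | v, Form.box π φ => ∀ w, Rel π v w → Sat w φ
  def Rel : Prog U → Val U → Val U → Prop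
    | Prog.add p, v, w => w = v ∪ {p}
    | Prog.rem p, v, w => w = v \ {p}
    | Prog.test φ, v, w => w = v ∧ Sat v φ
    | Prog.seq π₁ π₂, v, w => ∃ u, Rel π₁ v u ∧ Rel π₂ u w
    | Prog.choice π₁ π₂, v, w => Rel π₁ v w ∨ Rel π₂ v w
    | Prog.conv π, v, w => Rel π w v
end

def Form.falsum : Form U := Form.conj (Form.var (PVar.aux 0)) (Form.neg (Form.var (PVar.aux 0)))
def Form.top : Form U := Form.neg Form.falsum
def Form.impl (φ ψ : Form U) : Form U := Form.neg (Form.conj φ (Form.neg ψ))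
def Form.disj (φ ψ : Form U) : Form U := Form.neg (Form.conj (Form.neg φ) (Form.neg ψ))
def Form.equiv (φ ψ : Form U) : Form U := Form.conj (Form.impl φ ψ) (Form.impl ψ φ)
def Form.dia (π : Prog U) (φ : Form U) : Form U := Form.neg (Form.box π (Form.neg φ))
def Prog.skip : Prog U := Prog.test Form.top

/-- Sequential composition of a list of programs (`skip` for the empty list). -/
def seqList {β : Type} (f : β → Prog U) : List β → Prog U
  | [] => Prog.skip
  | p :: ps => Prog.seq (f p) (seqList f ps)

/-- Nondeterministic composition of a list of programs (`skip` for the empty list). -/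
def unionList {β : Type} (f : β → Prog U) : List β → Prog U
  | [] => Prog.skip
  | [p] => f p
  | p :: ps => Prog.choice (f p) (unionList f ps)

def mkTrueOne (L : List (PVar U)) : Prog U :=
  unionList (fun p => Prog.seq (Prog.test (Form.neg (Form.var p))) (Prog.add p)) L
def mkFalseOne (L : List (PVar U)) : Prog U :=
  unionList (fun p => Prog.seq (Prog.test (Form.var p)) (Prog.rem p)) L
def mkTrueSome (L : List (PVar U)) : Prog U :=
  seqList (fun p => Prog.choice (Prog.add p) Prog.skip) L
def mkFalseSome (L : List (PVar U)) : Prog U :=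
  seqList (fun p => Prog.choice (Prog.rem p) Prog.skip) L
def vary (L : List (PVar U)) : Prog U :=
  seqList (fun p => Prog.choice (Prog.add p) (Prog.rem p)) L
/-- dis(ATT_R): for each pair (x,y) in the list, make true att_{x,y} or att_{y,x}. -/
def dis (L : List (U × U)) : Prog U :=
  seqList (fun q => Prog.choice (Prog.add (PVar.att q.1 q.2)) (Prog.add (PVar.att q.2 q.1))) L

def conjList : List (Form U) → Form U
  | [] => Form.top
  | φ :: φs => Form.conj φ (conjList φs)
def disjList : List (Form U) → Form U
  | [] => Form.falsum
  | φ :: φs => Form.disj φ (disjList φs)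

/-- The elements of a finite universe in a fixed order. -/
def enum (U : Type) [Fintype U] : List U := Finset.univ.toList

def bigConj [Fintype U] (f : U → Form U) : Form U := conjList ((enum U).map f)
def bigDisj [Fintype U] (f : U → Form U) : Form U := disjList ((enum U).map f)

def INlist (U : Type) [Fintype U] : List (PVar U) := (enum U).map PVar.inn

/-- copy(IN_U) copies the value of in_x to in'_x, for every x ∈ U. -/
def copyIN (U : Type) [Fintype U] : Prog U :=
  seqList (fun x => Prog.choice
      (Prog.seq (Prog.test (Form.var (PVar.inn x))) (Prog.add (PVar.inn' x)))
      (Prog.seq (Prog.test (Form.neg (Form.var (PVar.inn x)))) (Prog.rem (PVar.inn' x))))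
    (enum U)

def Well (U : Type) [Fintype U] : Form U :=
  bigConj (fun x => Form.impl (Form.var (PVar.inn x)) (Form.var (PVar.aw x)))

def ConFree (U : Type) [Fintype U] : Form U :=
  Form.conj (Well U) (bigConj fun x => bigConj fun y =>
    Form.neg (Form.conj (Form.var (PVar.inn x))
      (Form.conj (Form.var (PVar.inn y)) (Form.var (PVar.att x y)))))

def AdmissibleF (U : Type) [Fintype U] : Form U :=
  Form.conj (ConFree U) (bigConj fun x => Form.impl (Form.var (PVar.inn x))
    (bigConj fun y => Form.impl (Form.conj (Form.var (PVar.aw y)) (Form.var (PVar.att y x)))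
      (bigDisj fun z => Form.conj (Form.var (PVar.inn z)) (Form.var (PVar.att z y)))))

def StableF (U : Type) [Fintype U] : Form U :=
  Form.conj (Well U) (bigConj fun x => Form.impl (Form.var (PVar.aw x))
    (Form.equiv (Form.var (PVar.inn x))
      (Form.neg (bigDisj fun y => Form.conj (Form.var (PVar.inn y)) (Form.var (PVar.att y x))))))

def CompleteF (U : Type) [Fintype U] : Form U :=
  Form.conj (ConFree U) (bigConj fun x => Form.equiv (Form.var (PVar.inn x))
    (bigConj fun y => Form.impl (Form.conj (Form.var (PVar.aw y)) (Form.var (PVar.att y x)))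
      (bigDisj fun z => Form.conj (Form.var (PVar.inn z)) (Form.var (PVar.att z y)))))

def GroundedF (U : Type) [Fintype U] : Form U :=
  Form.conj (CompleteF U)
    (Form.box (Prog.seq (mkFalseOne (INlist U)) (mkFalseSome (INlist U))) (Form.neg (CompleteF U)))

def PreferredF (U : Type) [Fintype U] : Form U :=
  Form.conj (AdmissibleF U)
    (Form.box (Prog.seq (mkTrueOne (INlist U)) (mkTrueSome (INlist U))) (Form.neg (AdmissibleF U)))

def NaiveF (U : Type) [Fintype U] : Form U :=
  Form.conj (ConFree U) (Form.box (mkTrueOne (INlist U)) (Form.neg (ConFree U)))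

def IncludedInCp (U : Type) [Fintype U] : Form U :=
  bigConj fun x => Form.impl
    (Form.disj (Form.var (PVar.inn x)) (Form.conj (Form.var (PVar.aw x))
      (bigDisj fun y => Form.conj (Form.var (PVar.inn y)) (Form.var (PVar.att y x)))))
    (Form.disj (Form.var (PVar.inn' x)) (Form.conj (Form.var (PVar.aw x))
      (bigDisj fun y => Form.conj (Form.var (PVar.inn' y)) (Form.var (PVar.att y x)))))

def IncludesCp (U : Type) [Fintype U] : Form U :=
  bigConj fun x => Form.impl
    (Form.disj (Form.var (PVar.inn' x)) (Form.conj (Form.var (PVar.aw x))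
      (bigDisj fun y => Form.conj (Form.var (PVar.inn' y)) (Form.var (PVar.att y x)))))
    (Form.disj (Form.var (PVar.inn x)) (Form.conj (Form.var (PVar.aw x))
      (bigDisj fun y => Form.conj (Form.var (PVar.inn y)) (Form.var (PVar.att y x)))))

/-- makeExt^σ = vary(IN_U); φ_σ? -/
def makeExt (U : Type) [Fintype U] (φ : Form U) : Prog U :=
  Prog.seq (vary (INlist U)) (Prog.test φ)

def SemiStableF (U : Type) [Fintype U] : Form U :=
  Form.conj (CompleteF U)
    (Form.box (Prog.seq (copyIN U) (makeExt U (CompleteF U)))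
      (Form.impl (IncludesCp U) (IncludedInCp U)))

/-- A_v -/
def Av (v : Val U) : Set U := {x | PVar.aw x ∈ v}
/-- R_v -/
def Rv (v : Val U) : Set (U × U) := {q | q.1 ∈ Av v ∧ q.2 ∈ Av v ∧ PVar.att q.1 q.2 ∈ v}
/-- E(v) -/
def Ev (v : Val U) : Set U := {x | PVar.inn x ∈ v}
/-- {x ∈ U : in'_x ∈ v} -/
def Cv (v : Val U) : Set U := {x | PVar.inn' x ∈ v}
/-- v_(A,R) = AW_A ∪ ATT_R -/
def valOf (A : Set U) (R : Set (U × U)) : Val U :=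
  (PVar.aw '' A) ∪ ((fun q : U × U => PVar.att q.1 q.2) '' R)

/-- E⁺, the set of arguments of A attacked by E in (A,R). -/
def attacked (A : Set U) (R : Set (U × U)) (E : Set U) : Set U :=
  {x ∈ A | ∃ y ∈ E, (y, x) ∈ R}
/-- E⊕ = E ∪ E⁺, the range of E. -/
def rangeOf (A : Set U) (R : Set (U × U)) (E : Set U) : Set U :=
  E ∪ attacked A R E

def IsConflictFree (A : Set U) (R : Set (U × U)) (E : Set U) : Prop :=
  E ⊆ A ∧ E ∩ attacked A R E = ∅
def Defends (A : Set U) (R : Set (U × U)) (E : Set U) (a : U) : Prop :=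
  ∀ x ∈ A, (x, a) ∈ R → x ∈ attacked A R E
def IsAdmissibleExt (A : Set U) (R : Set (U × U)) (E : Set U) : Prop :=
  IsConflictFree A R E ∧ ∀ a ∈ E, Defends A R E a
def IsStableExt (A : Set U) (R : Set (U × U)) (E : Set U) : Prop :=
  IsConflictFree A R E ∧ A \ E ⊆ attacked A R E
def IsCompleteExt (A : Set U) (R : Set (U × U)) (E : Set U) : Prop :=
  IsConflictFree A R E ∧ E = {a ∈ A | Defends A R E a}
def IsGroundedExt (A : Set U) (R : Set (U × U)) (E : Set U) : Prop :=
  IsCompleteExt A R E ∧ ∀ E', IsCompleteExt A R E' → E' ⊆ E → E' = E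
def IsPreferredExt (A : Set U) (R : Set (U × U)) (E : Set U) : Prop :=
  IsCompleteExt A R E ∧ ∀ E', IsCompleteExt A R E' → E ⊆ E' → E' = E
def IsNaiveExt (A : Set U) (R : Set (U × U)) (E : Set U) : Prop :=
  IsConflictFree A R E ∧ ∀ E', IsConflictFree A R E' → E ⊆ E' → E' = E
def IsSemiStableExt (A : Set U) (R : Set (U × U)) (E : Set U) : Prop :=
  IsCompleteExt A R E ∧ ¬ ∃ E', IsCompleteExt A R E' ∧ rangeOf A R E ⊂ rangeOf A R E'

end DLPA

end

noncomputable section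
open DLPA

/-- The list of awareness variables of a finite set of arguments, in a fixed order. -/
def AWlist {U : Type} (A : Finset U) : List (PVar U) := A.toList.map PVar.aw
/-- The list of attack variables of a finite attack relation, in a fixed order. -/
def ATTlist {U : Type} (R : Finset (U × U)) : List (PVar U) :=
  R.toList.map (fun q => PVar.att q.1 q.2)

/-- The defining conditions of an incomplete AF (A^F, R^F, A^?, R^?). -/
def IAFConds {U : Type} (AF Aq : Set U) (RF Rq : Set (U × U)) : Prop :=
  Disjoint AF Aq ∧ Disjoint RF Rq ∧
    RF ⊆ (AF ∪ Aq) ×ˢ (AF ∪ Aq) ∧ Rq ⊆ (AF ∪ Aq) ×ˢ (AF ∪ Aq)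

/-- (A*, R*) is a completion of the IAF (A^F, R^F, A^?, R^?). -/
def IsCompletionOfIAF {U : Type} (AF Aq : Set U) (RF Rq : Set (U × U))
    (As : Set U) (Rs : Set (U × U)) : Prop :=
  AF ⊆ As ∧ As ⊆ AF ∪ Aq ∧
    RF ∩ As ×ˢ As ⊆ Rs ∧ Rs ⊆ (RF ∪ Rq) ∩ As ×ˢ As

end

noncomputable section
open DLPA

/-- The defining conditions of a control AF (A^F, R^F, A^?, R^?, R^↔, A^C, R^C). -/
def CAFConds {U : Type} (AF Aq : Set U) (RF Rq Rl : Set (U × U))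
    (AC : Set U) (RC : Set (U × U)) : Prop :=
  Disjoint AF Aq ∧ Disjoint AF AC ∧ Disjoint Aq AC ∧
    RF ⊆ (AF ∪ Aq) ×ˢ (AF ∪ Aq) ∧ Rq ⊆ (AF ∪ Aq) ×ˢ (AF ∪ Aq) ∧
    Rl ⊆ (AF ∪ Aq) ×ˢ (AF ∪ Aq) ∧
    (∀ x y, (x, y) ∈ Rl → (y, x) ∈ Rl) ∧ (∀ x, (x, x) ∉ Rl) ∧
    RC ⊆ (AC ×ˢ (AF ∪ Aq ∪ AC)) ∪ ((AF ∪ Aq ∪ AC) ×ˢ AC) ∧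
    Disjoint RF Rq ∧ Disjoint RF Rl ∧ Disjoint RF RC ∧
    Disjoint Rq Rl ∧ Disjoint Rq RC ∧ Disjoint Rl RC

/-- (A*, R*) is a completion of the CAF (A^F, R^F, A^?, R^?, R^↔, A^C, R^C). -/
def IsCompletionOfCAF {U : Type} (AF Aq : Set U) (RF Rq Rl : Set (U × U))
    (AC : Set U) (RC : Set (U × U)) (As : Set U) (Rs : Set (U × U)) : Prop :=
  AF ∪ AC ⊆ As ∧ As ⊆ AF ∪ AC ∪ Aq ∧
    (RF ∪ RC) ∩ As ×ˢ As ⊆ Rs ∧ Rs ⊆ (RF ∪ RC ∪ Rq ∪ Rl) ∩ As ×ˢ As ∧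
    ∀ x y, x ∈ As → y ∈ As → (x, y) ∈ Rl → ((x, y) ∈ Rs ∨ (y, x) ∈ Rs)

end

/-! Every program in `control^CAF; makeComp^CAF` only adds variables, so the valuations it reaches
from `v_CAF` are exactly `valOf` of an argument set `A^F ∪ X ∪ Y` and an attack set
`R^F ∪ R^C ∪ S ∪ T`, with `X ⊆ A^C`, `Y ⊆ A^?`, `S ⊆ R^?` and `T` an orientation of `R^↔`. Reading
`(A_v, R_v)` off such a valuation gives a completion of `CAF_X` (the reversed pairs that `dis` may
add stay inside `R^↔` because it is symmetric); conversely a completion of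
`CAF_CFG` is recovered by taking `X = CFG`, `Y = A* ∩ A^?`, `S = R* ∩ R^?` and orienting each
pair of `R^↔` the way `R*` does. -/

namespace DLPA

variable {U : Type}

abbrev attVar (q : U × U) : PVar U := PVar.att q.1 q.2

noncomputable def controlCAF (AC : Finset U) : Prog U := mkTrueSome (AWlist AC)

noncomputable def makeCompCAF (Aq : Finset U) (Rq Rl : Finset (U × U)) : Prog U :=
  Prog.seq (mkTrueSome (AWlist Aq)) (Prog.seq (mkTrueSome (ATTlist Rq)) (dis Rl.toList))

section Semantics

variable {v w : Val U}

lemma rel_skip_iff : Rel Prog.skip v w ↔ w = v := by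
  simp [Prog.skip, Rel, Form.top, Form.falsum, Sat]

lemma rel_seq_iff {π₁ π₂ : Prog U} : Rel (Prog.seq π₁ π₂) v w ↔ ∃ u, Rel π₁ v u ∧ Rel π₂ u w := by
  rw [Rel]

lemma rel_mkTrueSome_iff (L : List (PVar U)) :
    Rel (mkTrueSome L) v w ↔ v ⊆ w ∧ w ⊆ v ∪ {p | p ∈ L} := by
  induction L generalizing v with
  | nil => simp [mkTrueSome, seqList, rel_skip_iff, Set.Subset.antisymm_iff, and_comm]
  | cons p ps ih =>
    simp only [mkTrueSome, seqList, rel_seq_iff, Rel, rel_skip_iff] at ih ⊢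
    simp only [ih]
    constructor
    · rintro ⟨u, rfl | rfl, hvw, hwv⟩
      · refine ⟨Set.subset_union_left.trans hvw, hwv.trans ?_⟩
        intro q
        simp only [Set.mem_union, Set.mem_singleton_iff, Set.mem_ofPred_eq, List.mem_cons]
        tauto
      · refine ⟨hvw, hwv.trans fun q => ?_⟩
        simp only [Set.mem_union, Set.mem_ofPred_eq, List.mem_cons]
        tauto
    · rintro ⟨hvw, hwv⟩
      by_cases hp : p ∈ w
      · refine ⟨v ∪ {p}, .inl rfl, Set.union_subset hvw (by simpa), hwv.trans ?_⟩
        intro q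
        simp only [Set.mem_union, Set.mem_singleton_iff, Set.mem_ofPred_eq, List.mem_cons]
        tauto
      · refine ⟨v, .inr rfl, hvw, fun q hq => ?_⟩
        rcases hwv hq with h | h
        · exact .inl h
        · rcases List.mem_cons.1 h with rfl | h
          · exact absurd hq hp
          · exact .inr h

lemma rel_mkTrueSome_iff_exists_union (L : List (PVar U)) :
    Rel (mkTrueSome L) v w ↔ ∃ P ⊆ {p | p ∈ L}, w = v ∪ P := by
  rw [rel_mkTrueSome_iff]
  constructor
  · rintro ⟨hvw, hwv⟩
    exact ⟨w \ v, Set.sdiff_subset_iff.2 hwv, (Set.union_sdiff_cancel hvw).symm⟩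
  · rintro ⟨P, hP, rfl⟩
    exact ⟨Set.subset_union_left, Set.union_subset_union_right v hP⟩

lemma rel_mkTrueSome_AWlist_iff (A : Finset U) :
    Rel (mkTrueSome (AWlist A)) v w ↔ ∃ X ⊆ (A : Set U), w = v ∪ PVar.aw '' X := by
  have hL : {p | p ∈ AWlist A} = PVar.aw '' (A : Set U) := by ext; simp [AWlist]
  simp only [rel_mkTrueSome_iff_exists_union, hL, Set.subset_image_iff]
  constructor
  · rintro ⟨_, ⟨X, hX, rfl⟩, rfl⟩
    exact ⟨X, hX, rfl⟩
  · rintro ⟨X, hX, rfl⟩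
    exact ⟨_, ⟨X, hX, rfl⟩, rfl⟩

lemma rel_mkTrueSome_ATTlist_iff (R : Finset (U × U)) :
    Rel (mkTrueSome (ATTlist R)) v w ↔ ∃ S ⊆ (R : Set (U × U)), w = v ∪ attVar '' S := by
  have hL : {p | p ∈ ATTlist R} = attVar '' (R : Set (U × U)) := by ext; simp [ATTlist]
  simp only [rel_mkTrueSome_iff_exists_union, hL, Set.subset_image_iff]
  constructor
  · rintro ⟨_, ⟨S, hS, rfl⟩, rfl⟩
    exact ⟨S, hS, rfl⟩
  · rintro ⟨S, hS, rfl⟩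
    exact ⟨_, ⟨S, hS, rfl⟩, rfl⟩

lemma exists_orientation_of_rel_dis {L : List (U × U)} (h : Rel (dis L) v w) :
    ∃ T ⊆ {q | q ∈ L ∨ q.swap ∈ L}, (∀ q ∈ L, q ∈ T ∨ q.swap ∈ T) ∧ w = v ∪ attVar '' T := by
  induction L generalizing v with
  | nil =>
    rw [dis, seqList, rel_skip_iff] at h
    exact ⟨∅, by simp, by simp, by simp [h]⟩
  | cons q L ih =>
    simp only [dis, seqList, rel_seq_iff, Rel] at h
    obtain ⟨u, hu, hw⟩ := h
    obtain ⟨T, hTL, hcover, rfl⟩ := ih hw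
    obtain ⟨o, ho, rfl⟩ : ∃ o, (o = q ∨ o = q.swap) ∧ u = v ∪ {attVar o} := by
      rcases hu with rfl | rfl
      exacts [⟨q, .inl rfl, rfl⟩, ⟨q.swap, .inr rfl, rfl⟩]
    refine ⟨insert o T, Set.insert_subset ?_ ?_, fun r hr => ?_, ?_⟩
    · rcases ho with rfl | rfl <;> simp
    · exact hTL.trans fun r => by simp only [Set.mem_ofPred_eq, List.mem_cons]; tauto
    · rcases List.mem_cons.1 hr with rfl | hr
      · rcases ho with rfl | rfl <;> simp
      · exact (hcover r hr).imp (Set.mem_insert_of_mem _) (Set.mem_insert_of_mem _)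
    · rw [Set.image_insert_eq, Set.union_assoc, Set.singleton_union]

lemma rel_dis_orient (L : List (U × U)) {c : U × U → U × U} (hc : ∀ q, c q = q ∨ c q = q.swap)
    (v : Val U) : Rel (dis L) v (v ∪ attVar '' (c '' {q | q ∈ L})) := by
  induction L generalizing v with
  | nil => simp [dis, seqList, rel_skip_iff]
  | cons q L ih =>
    rw [dis, seqList, rel_seq_iff]
    refine ⟨v ∪ {attVar (c q)}, ?_, ?_⟩
    · rcases hc q with h | h <;> simp [Rel, attVar, h]
    · convert ih (v ∪ {attVar (c q)}) using 1
      · rfl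
      rw [Set.union_assoc, Set.singleton_union, ← Set.image_insert_eq, ← Set.image_insert_eq]
      congr 3
      ext; simp

end Semantics

section Valuations

variable (A X : Set U) (R S : Set (U × U))

lemma valOf_union_aw : valOf A R ∪ PVar.aw '' X = valOf (A ∪ X) R := by
  rw [valOf, valOf, Set.image_union, Set.union_right_comm]

lemma valOf_union_att : valOf A R ∪ attVar '' S = valOf A (R ∪ S) := by
  rw [valOf, valOf, Set.image_union, Set.union_assoc]

@[simp] lemma Av_valOf : Av (valOf A R) = A := by
  ext; simp [Av, valOf]

@[simp] lemma Rv_valOf : Rv (valOf A R) = R ∩ A ×ˢ A := by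
  ext ⟨a, b⟩
  simp only [Rv, Av_valOf]
  simp [valOf]
  tauto

end Valuations

section Reachability

variable {A : Set U} {R : Set (U × U)} {AC Aq : Finset U} {Rq Rl : Finset (U × U)}

theorem exists_of_rel_controlCAF_makeCompCAF {v : Val U}
    (h : Rel (Prog.seq (controlCAF AC) (makeCompCAF Aq Rq Rl)) (valOf A R) v) :
    ∃ X ⊆ (AC : Set U), ∃ Y ⊆ (Aq : Set U), ∃ S ⊆ (Rq : Set (U × U)),
      ∃ T ⊆ {q | q ∈ Rl ∨ q.swap ∈ Rl},
        (∀ q ∈ Rl, q ∈ T ∨ q.swap ∈ T) ∧ v = valOf (A ∪ X ∪ Y) (R ∪ S ∪ T) := by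
  obtain ⟨_, h₁, _, h₂, _, h₃, h₄⟩ := by
    simpa only [controlCAF, makeCompCAF, rel_seq_iff] using h
  obtain ⟨X, hX, rfl⟩ := (rel_mkTrueSome_AWlist_iff AC).1 h₁
  obtain ⟨Y, hY, rfl⟩ := (rel_mkTrueSome_AWlist_iff Aq).1 h₂
  obtain ⟨S, hS, rfl⟩ := (rel_mkTrueSome_ATTlist_iff Rq).1 h₃
  obtain ⟨T, hT, hcover, rfl⟩ := exists_orientation_of_rel_dis h₄
  refine ⟨X, hX, Y, hY, S, hS, T, by simpa using hT, by simpa using hcover, ?_⟩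
  simp only [valOf_union_aw, valOf_union_att]

theorem rel_controlCAF_makeCompCAF {X Y : Set U} {S : Set (U × U)}
    (hX : X ⊆ AC) (hY : Y ⊆ Aq) (hS : S ⊆ Rq) {c : U × U → U × U}
    (hc : ∀ q, c q = q ∨ c q = q.swap) :
    Rel (Prog.seq (controlCAF AC) (makeCompCAF Aq Rq Rl)) (valOf A R)
      (valOf (A ∪ X ∪ Y) (R ∪ S ∪ c '' Rl)) := by
  have hRl : c '' Rl = c '' {q | q ∈ Rl.toList} := by simp
  simp only [controlCAF, makeCompCAF, rel_seq_iff, rel_mkTrueSome_AWlist_iff,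
    rel_mkTrueSome_ATTlist_iff]
  refine ⟨_, ⟨X, hX, (valOf_union_aw _ _ _).symm⟩, _, ⟨Y, hY, (valOf_union_aw _ _ _).symm⟩,
    _, ⟨S, hS, (valOf_union_att _ _ _).symm⟩, ?_⟩
  rw [hRl, ← valOf_union_att _ (R ∪ S)]
  exact rel_dis_orient _ hc _

end Reachability

end DLPA

section Completions

variable {U : Type} {AF Aq CFG As : Set U} {RF RC Rq Rl Rs : Set (U × U)}

theorem isCompletionOfCAF_of_subsets {X Y : Set U} {S T : Set (U × U)}
    (hY : Y ⊆ Aq) (hS : S ⊆ Rq) (hT : T ⊆ Rl) (hcover : ∀ q ∈ Rl, q ∈ T ∨ q.swap ∈ T) :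
    IsCompletionOfCAF AF Aq RF Rq Rl X (RC ∩ (AF ∪ Aq ∪ X) ×ˢ (AF ∪ Aq ∪ X))
      (AF ∪ X ∪ Y) ((RF ∪ RC ∪ S ∪ T) ∩ (AF ∪ X ∪ Y) ×ˢ (AF ∪ X ∪ Y)) := by
  have hA : AF ∪ X ∪ Y ⊆ AF ∪ Aq ∪ X :=
    (Set.union_subset_union_right _ hY).trans (Set.union_right_comm AF X Aq).subset
  refine ⟨Set.subset_union_left, Set.union_subset_union_right _ hY, ?_, ?_, ?_⟩
  · rintro q ⟨hq | hq, hqA⟩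
    exacts [⟨.inl (.inl (.inl hq)), hqA⟩, ⟨.inl (.inl (.inr hq.1)), hqA⟩]
  · rintro q ⟨((hq | hq) | hq) | hq, hqA⟩
    · exact ⟨.inl (.inl (.inl hq)), hqA⟩
    · exact ⟨.inl (.inl (.inr ⟨hq, Set.prod_mono hA hA hqA⟩)), hqA⟩
    · exact ⟨.inl (.inr (hS hq)), hqA⟩
    · exact ⟨.inr (hT hq), hqA⟩
  · intro x y hx hy hxy
    exact (hcover _ hxy).imp (fun h => ⟨.inr h, hx, hy⟩) (fun h => ⟨.inr h, hy, hx⟩)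

noncomputable def orientAlong (Rs : Set (U × U)) (q : U × U) : U × U := by
  classical exact if q ∈ Rs then q else q.swap

lemma orientAlong_eq_or (Rs : Set (U × U)) (q : U × U) :
    orientAlong Rs q = q ∨ orientAlong Rs q = q.swap := by
  unfold orientAlong
  split_ifs
  exacts [.inl rfl, .inr rfl]

theorem IsCompletionOfCAF.union_union_inter_eq
    (hcomp : IsCompletionOfCAF AF Aq RF Rq Rl CFG
    (RC ∩ (AF ∪ Aq ∪ CFG) ×ˢ (AF ∪ Aq ∪ CFG)) As Rs) :
    AF ∪ CFG ∪ As ∩ Aq = As := by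
  refine Set.Subset.antisymm (Set.union_subset hcomp.1 Set.inter_subset_left) fun x hx => ?_
  rcases hcomp.2.1 hx with h | h
  exacts [.inl h, .inr ⟨hx, h⟩]

theorem IsCompletionOfCAF.union_image_orientAlong_inter_eq
    (hcomp : IsCompletionOfCAF AF Aq RF Rq Rl CFG
    (RC ∩ (AF ∪ Aq ∪ CFG) ×ˢ (AF ∪ Aq ∪ CFG)) As Rs) :
    (RF ∪ RC ∪ Rs ∩ Rq ∪ orientAlong Rs '' Rl) ∩ As ×ˢ As = Rs := by
  obtain ⟨-, hAs, hlower, hupper, hcover⟩ := hcomp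
  have hA : As ⊆ AF ∪ Aq ∪ CFG := hAs.trans (Set.union_right_comm AF CFG Aq).subset
  refine Set.Subset.antisymm ?_ fun q hq => ?_
  · rintro q ⟨((hq | hq) | hq) | ⟨p, hp, rfl⟩, hqA⟩
    · exact hlower ⟨.inl hq, hqA⟩
    · exact hlower ⟨.inr ⟨hq, Set.prod_mono hA hA hqA⟩, hqA⟩
    · exact hq.1
    · unfold orientAlong at hqA ⊢
      split_ifs at hqA ⊢ with hpRs
      · exact hpRs
      · exact (hcover p.1 p.2 hqA.2 hqA.1 hp).resolve_left hpRs
  · obtain ⟨h, hqA⟩ := hupper hq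
    refine ⟨?_, hqA⟩
    rcases h with ((h | h) | h) | h
    · exact .inl (.inl (.inl h))
    · exact .inl (.inl (.inr h.1))
    · exact .inl (.inr ⟨hq, h⟩)
    · exact .inr ⟨q, h, by simp [orientAlong, hq]⟩

end Completions

open DLPA in
/-- Proposition 10. -/
theorem control_makeComp_CAF_correct
    (U : Type) [Fintype U] [Nonempty U]
    (AF Aq AC : Finset U) (RF Rq Rl RC : Finset (U × U))
    (hCAF : CAFConds (AF : Set U) (Aq : Set U) (RF : Set (U × U)) (Rq : Set (U × U))
      (Rl : Set (U × U)) (AC : Set U) (RC : Set (U × U))) :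
    (∀ v : Val U,
        Rel (Prog.seq (mkTrueSome (AWlist AC))
              (Prog.seq (mkTrueSome (AWlist Aq))
                (Prog.seq (mkTrueSome (ATTlist Rq)) (dis Rl.toList))))
            (valOf (AF : Set U) ((RF : Set (U × U)) ∪ (RC : Set (U × U)))) v →
        ∃ CFG : Set U, CFG ⊆ (AC : Set U) ∧
          ∃ (As : Set U) (Rs : Set (U × U)),
            IsCompletionOfCAF (AF : Set U) (Aq : Set U) (RF : Set (U × U)) (Rq : Set (U × U))
              (Rl : Set (U × U)) CFG
              ((RC : Set (U × U)) ∩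
                (((AF : Set U) ∪ (Aq : Set U) ∪ CFG) ×ˢ ((AF : Set U) ∪ (Aq : Set U) ∪ CFG)))
              As Rs ∧
            Av v = As ∧ Rv v = Rs) ∧
    (∀ CFG : Set U, CFG ⊆ (AC : Set U) →
      ∀ (As : Set U) (Rs : Set (U × U)),
        IsCompletionOfCAF (AF : Set U) (Aq : Set U) (RF : Set (U × U)) (Rq : Set (U × U))
          (Rl : Set (U × U)) CFG
          ((RC : Set (U × U)) ∩
            (((AF : Set U) ∪ (Aq : Set U) ∪ CFG) ×ˢ ((AF : Set U) ∪ (Aq : Set U) ∪ CFG)))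
          As Rs →
        ∃ v : Val U,
          Rel (Prog.seq (mkTrueSome (AWlist AC))
                (Prog.seq (mkTrueSome (AWlist Aq))
                  (Prog.seq (mkTrueSome (ATTlist Rq)) (dis Rl.toList))))
              (valOf (AF : Set U) ((RF : Set (U × U)) ∪ (RC : Set (U × U)))) v ∧
          Av v = As ∧ Rv v = Rs) := by
  have hRl : {q | q ∈ Rl ∨ q.swap ∈ Rl} ⊆ (Rl : Set (U × U)) := by
    obtain ⟨-, -, -, -, -, -, hsymm, -⟩ := hCAF
    rintro ⟨x, y⟩ (h | h)
    exacts [h, hsymm y x h]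
  refine ⟨fun v hv => ?_, fun CFG hCFG As Rs hcomp => ?_⟩
  · obtain ⟨X, hX, Y, hY, S, hS, T, hT, hcover, rfl⟩ := exists_of_rel_controlCAF_makeCompCAF hv
    exact ⟨X, hX, _, _, isCompletionOfCAF_of_subsets hY hS (hT.trans hRl) hcover,
      Av_valOf _ _, Rv_valOf _ _⟩
  · refine ⟨_, rel_controlCAF_makeCompCAF hCFG (Set.inter_subset_right : As ∩ (Aq : Set U) ⊆ Aq)
      (Set.inter_subset_right : Rs ∩ (Rq : Set (U × U)) ⊆ Rq) (orientAlong_eq_or Rs), ?_, ?_⟩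
    · rw [Av_valOf, hcomp.union_union_inter_eq]
    · rw [Rv_valOf, hcomp.union_union_inter_eq, hcomp.union_image_orientAlong_inter_eq]
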